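/- For every integer n ≥ 2, the n-dimensional hypercube satisfies str(Q_n) ≤ 2ⁿ + 2^{n−2} + 1. -/

import Mathlib

/-!
Split `Q_{n+1}` into two copies of `Q_n` along the first coordinate and, from a numbering `f` of
`Q_n`, number `(0, y)` by `2 f(y) - 1` and `(1, y)` by `2^{n+1} + 2 - 2 f(y)`. The edges between
the copies all get sum `2^{n+1} + 1`, and an edge of sum `s` inside `Q_n` becomes edges of sums
`2s - 2` and `2^{n+2} + 4 - 2s`. So if all edge sums of `f` lie in the window
`[3·2^n/4 + 2, 5·2^n/4 + 1]`, the new numbering keeps them in the corresponding window for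
`n + 1`. An explicit numbering of `Q_5` starts this induction; `Q_2`, `Q_3`, `Q_4` are numbered
explicitly.
-/

open Finset

/-- A numbering of a graph of order `Fintype.card V` is a bijection onto `{1, …, card V}`. -/
def IsNumbering {V : Type*} [Fintype V] (f : V → ℕ) : Prop :=
  Set.BijOn f Set.univ (Set.Icc 1 (Fintype.card V))

/-- The strength `str_f` of a numbering `f` of `G`: the maximum of `f u + f v` over edges. -/
noncomputable def strOf {V : Type*} [Fintype V] (G : SimpleGraph V) (f : V → ℕ) : ℕ :=
  sSup {n | ∃ u v, G.Adj u v ∧ n = f u + f v}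

/-- The strength of a graph: the minimum over all numberings `f` of `str_f`. -/
noncomputable def strength {V : Type*} [Fintype V] (G : SimpleGraph V) : ℕ :=
  sInf {n | ∃ f : V → ℕ, IsNumbering f ∧ strOf G f = n}

/-- The `n`-dimensional hypercube `Q_n`: vertices are binary vectors of length `n`, two
vertices being adjacent iff they differ in exactly one coordinate. -/
def hypercube (n : ℕ) : SimpleGraph (Fin n → Bool) where
  Adj u v := (Finset.univ.filter fun i => u i ≠ v i).card = 1
  symm := by
    constructor
    intro u v h
    simpa [ne_comm] using h
  loopless := by
    constructor
    intro u h
    simp at h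

section Strength

variable {V : Type*} [Fintype V] {G : SimpleGraph V} {f : V → ℕ}

theorem strength_le_strOf (hf : IsNumbering f) : strength G ≤ strOf G f :=
  Nat.sInf_le ⟨f, hf, rfl⟩

theorem strOf_le {B : ℕ} (hB : ∀ u v, G.Adj u v → f u + f v ≤ B) : strOf G f ≤ B :=
  csSup_le' <| by
    rintro _ ⟨u, v, huv, rfl⟩
    exact hB u v huv

theorem IsNumbering.injective (hf : IsNumbering f) : Function.Injective f :=
  Set.injOn_univ.mp hf.injOn

theorem IsNumbering.mem_Icc (hf : IsNumbering f) (x : V) :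
    f x ∈ Set.Icc 1 (Fintype.card V) :=
  hf.mapsTo (Set.mem_univ x)

theorem isNumbering_of_injective (hf : Function.Injective f)
    (hmem : ∀ x, f x ∈ Set.Icc 1 (Fintype.card V)) : IsNumbering f := by
  classical
  refine ⟨fun x _ ↦ hmem x, hf.injOn, ?_⟩
  have himage : univ.image f = Icc 1 (Fintype.card V) :=
    eq_of_subset_of_card_le (fun _ hy ↦ by
        obtain ⟨x, -, rfl⟩ := mem_image.mp hy
        simpa using hmem x)
      (by simp [card_image_of_injective _ hf])
  intro m hm
  have hm' : m ∈ univ.image f := himage ▸ mem_Icc.mpr hm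
  obtain ⟨x, -, rfl⟩ := mem_image.mp hm'
  exact ⟨x, Set.mem_univ x, rfl⟩

end Strength

instance (n : ℕ) : DecidableRel (hypercube n).Adj := fun u v ↦
  inferInstanceAs (Decidable (hammingDist u v = 1))

theorem hammingDist_cons {β : Type*} [DecidableEq β] {n : ℕ} (a b : β) (x y : Fin n → β) :
    hammingDist (Fin.cons a x : Fin (n + 1) → β) (Fin.cons b y) =
      (if a = b then 0 else 1) + hammingDist x y := by
  simp only [hammingDist, card_filter, Fin.sum_univ_succ, Fin.cons_zero, Fin.cons_succ, ite_not]

namespace hypercube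

theorem card_vertices (n : ℕ) : Fintype.card (Fin n → Bool) = 2 ^ n := by
  simp

theorem adj_iff {n : ℕ} {u v : Fin n → Bool} :
    (hypercube n).Adj u v ↔ hammingDist u v = 1 := Iff.rfl

theorem adj_cons {n : ℕ} {a b : Bool} {x y : Fin n → Bool} :
    (hypercube (n + 1)).Adj (Fin.cons a x) (Fin.cons b y) ↔
      a ≠ b ∧ x = y ∨ a = b ∧ (hypercube n).Adj x y := by
  rw [adj_iff, adj_iff, hammingDist_cons, ← hammingDist_eq_zero]
  by_cases h : a = b <;> simp [h]

end hypercube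

def doubleNumbering {n : ℕ} (f : (Fin n → Bool) → ℕ) (x : Fin (n + 1) → Bool) : ℕ :=
  bif x 0 then 2 ^ (n + 1) + 2 - 2 * f (Fin.tail x) else 2 * f (Fin.tail x) - 1

@[simp]
theorem doubleNumbering_cons {n : ℕ} (f : (Fin n → Bool) → ℕ) (b : Bool)
    (y : Fin n → Bool) :
    doubleNumbering f (Fin.cons b y) = bif b then 2 ^ (n + 1) + 2 - 2 * f y else 2 * f y - 1 := by
  simp [doubleNumbering]

theorem IsNumbering.doubleNumbering {n : ℕ} {f : (Fin n → Bool) → ℕ} (hf : IsNumbering f) :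
    IsNumbering (doubleNumbering f) := by
  have hbound (y) : 1 ≤ f y ∧ f y ≤ 2 ^ n := by simpa using hf.mem_Icc y
  have hpow : 2 ^ (n + 1) = 2 * 2 ^ n := pow_succ' 2 n
  refine isNumbering_of_injective ?_ fun x ↦ ?_
  · intro x x' h
    cases x using Fin.consCases with | cons a y => ?_
    cases x' using Fin.consCases with | cons a' y' => ?_
    have := hbound y
    have := hbound y'
    have key : a = a' ∧ f y = f y' := by
      cases a <;> cases a' <;>
        simp only [doubleNumbering_cons, cond_true, cond_false, true_and, false_and,
          Bool.false_eq_true, Bool.true_eq_false] at h ⊢ <;>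
        omega
    rw [key.1, hf.injective key.2]
  · cases x using Fin.consCases with | cons a y => ?_
    have := hbound y
    cases a <;> simp only [doubleNumbering_cons, cond_true, cond_false, Set.mem_Icc,
      hypercube.card_vertices] <;> omega

def IsBalancedNumbering (n : ℕ) (f : (Fin n → Bool) → ℕ) : Prop :=
  IsNumbering f ∧ ∀ u v, (hypercube n).Adj u v →
    3 * 2 ^ n + 8 ≤ 4 * (f u + f v) ∧ 4 * (f u + f v) ≤ 5 * 2 ^ n + 4

theorem IsBalancedNumbering.doubleNumbering {n : ℕ} {f : (Fin n → Bool) → ℕ} (hn : n ≠ 0)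
    (hf : IsBalancedNumbering n f) : IsBalancedNumbering (n + 1) (doubleNumbering f) := by
  obtain ⟨hnum, hedge⟩ := hf
  refine ⟨hnum.doubleNumbering, fun u v huv ↦ ?_⟩
  cases u using Fin.consCases with | cons a y => ?_
  cases v using Fin.consCases with | cons b z => ?_
  have hy : 1 ≤ f y ∧ f y ≤ 2 ^ n := by simpa using hnum.mem_Icc y
  have hz : 1 ≤ f z ∧ f z ≤ 2 ^ n := by simpa using hnum.mem_Icc z
  have hpow : 2 ^ (n + 1) = 2 * 2 ^ n := pow_succ' 2 n
  have hpos : 2 ≤ 2 ^ n := Nat.le_self_pow hn 2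
  rcases hypercube.adj_cons.mp huv with ⟨hab, rfl⟩ | ⟨rfl, hyz⟩
  · cases a <;> cases b <;> simp only [ne_eq, not_true_eq_false] at hab <;>
      simp only [doubleNumbering_cons, cond_true, cond_false] <;> omega
  · have := hedge y z hyz
    cases a <;> simp only [doubleNumbering_cons, cond_true, cond_false] <;> omega

theorem IsBalancedNumbering.strength_le {n : ℕ} {f : (Fin n → Bool) → ℕ} (hn : 2 ≤ n)
    (hf : IsBalancedNumbering n f) : strength (hypercube n) ≤ 2 ^ n + 2 ^ (n - 2) + 1 := by
  refine (strength_le_strOf hf.1).trans (strOf_le fun u v huv ↦ ?_)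
  have : 2 ^ n = 2 ^ (n - 2) * 2 ^ 2 := by rw [← pow_add, Nat.sub_add_cancel hn]
  have := (hf.2 u v huv).2
  omega

def tableNumbering {n : ℕ} (l : List ℕ) (x : Fin n → Bool) : ℕ :=
  l.getD (∑ i, (x i).toNat * 2 ^ (i : ℕ)) 0

theorem isBalancedNumbering_five :
    IsBalancedNumbering 5 (tableNumbering [15, 23, 16, 10, 21, 6, 17, 20, 26, 3, 14, 27, 8, 31,
      19, 7, 24, 5, 13, 22, 11, 30, 18, 9, 2, 32, 25, 4, 28, 1, 12, 29]) :=
  ⟨isNumbering_of_injective (by decide) (by decide), by decide⟩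

theorem exists_isBalancedNumbering {n : ℕ} (hn : 5 ≤ n) :
    ∃ f, IsBalancedNumbering n f := by
  induction n, hn using Nat.le_induction with
  | base => exact ⟨_, isBalancedNumbering_five⟩
  | succ n hn ih =>
    obtain ⟨f, hf⟩ := ih
    exact ⟨_, hf.doubleNumbering (by omega)⟩

theorem strength_hypercube_two_le : strength (hypercube 2) ≤ 6 :=
  (strength_le_strOf (f := tableNumbering [1, 3, 4, 2])
    (isNumbering_of_injective (by decide) (by decide))).trans (strOf_le (by decide))

theorem strength_hypercube_three_le : strength (hypercube 3) ≤ 11 :=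
  (strength_le_strOf (f := tableNumbering [1, 5, 6, 4, 8, 2, 3, 7])
    (isNumbering_of_injective (by decide) (by decide))).trans (strOf_le (by decide))

theorem strength_hypercube_four_le : strength (hypercube 4) ≤ 21 :=
  (strength_le_strOf
    (f := tableNumbering [16, 5, 2, 11, 4, 9, 13, 8, 1, 10, 14, 7, 15, 3, 6, 12])
    (isNumbering_of_injective (by decide) (by decide))).trans (strOf_le (by decide))

/-- For `n ≥ 2`, `str(Q_n) ≤ 2ⁿ + 2^(n-2) + 1`. -/
theorem strength_hypercube_le (n : ℕ) (hn : 2 ≤ n) :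
    strength (hypercube n) ≤ 2 ^ n + 2 ^ (n - 2) + 1 := by
  rcases le_or_gt 5 n with h5 | h5
  · obtain ⟨f, hf⟩ := exists_isBalancedNumbering h5
    exact hf.strength_le hn
  · interval_cases n
    · exact strength_hypercube_two_le
    · exact strength_hypercube_three_le
    · exact strength_hypercube_four_le
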